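/- arXiv:1105.0354 — 9 statements merged into one kernel-verified Lean document; each statement's English description precedes it below -/
import Mathlib

section
/- The formulas ¬□⊥ and ◇⊤ are derivable in GMALL, where ◇⊤ corresponds to the intuitionistic modal axiom D; that is, the sequents ⇒ ¬□⊥ and ⇒ ◇⊤ are derivable. -/
/-- Formulas of MALL: atoms, constants 0, 1, ⊥, ⊤, negation, tensor ⊗,
par ⊕, additive conjunction ∧ and additive disjunction ∨. -/
inductive MF : Type
  | atom : Nat → MF
  | zero : MF
  | one : MF
  | bot : MF
  | top : MF
  | neg : MF → MF
  | tensor : MF → MF → MF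
  | par : MF → MF → MF
  | conj : MF → MF → MF
  | disj : MF → MF → MF

/-- Linear implication A ⊸ B := ¬A ⊕ B. -/
def MF.imp (A B : MF) : MF := MF.par (MF.neg A) B

/-- Tarskian possibility ◇A := ¬A ⊸ A. -/
def MF.diam (A : MF) : MF := MF.imp (MF.neg A) A

/-- Tarskian necessity □A := ¬◇¬A. -/
def MF.box (A : MF) : MF := MF.neg (MF.diam (MF.neg A))

/-- `Deriv W M C Γ Δ` : the sequent Γ ⇒ Δ (Γ, Δ finite multisets) is derivable
in GMALL extended by weakening (if `W`), mingle (if `M`), contraction (if `C`). -/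
inductive Deriv (W M C : Prop) : Multiset MF → Multiset MF → Prop
  | id (A : MF) : Deriv W M C {A} {A}
  | l0 : Deriv W M C {MF.zero} 0
  | r0 {Γ Δ} : Deriv W M C Γ Δ → Deriv W M C Γ (MF.zero ::ₘ Δ)
  | l1 {Γ Δ} : Deriv W M C Γ Δ → Deriv W M C (MF.one ::ₘ Γ) Δ
  | r1 : Deriv W M C 0 {MF.one}
  | lbot {Γ Δ} : Deriv W M C (MF.bot ::ₘ Γ) Δ
  | rtop {Γ Δ} : Deriv W M C Γ (MF.top ::ₘ Δ)
  | ltensor {A B Γ Δ} : Deriv W M C (A ::ₘ B ::ₘ Γ) Δ →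
      Deriv W M C (MF.tensor A B ::ₘ Γ) Δ
  | rtensor {A B Γ Γ' Δ Δ'} : Deriv W M C Γ (A ::ₘ Δ) → Deriv W M C Γ' (B ::ₘ Δ') →
      Deriv W M C (Γ + Γ') (MF.tensor A B ::ₘ (Δ + Δ'))
  | lpar {A B Γ Γ' Δ Δ'} : Deriv W M C (A ::ₘ Γ) Δ → Deriv W M C (B ::ₘ Γ') Δ' →
      Deriv W M C (MF.par A B ::ₘ (Γ + Γ')) (Δ + Δ')
  | rpar {A B Γ Δ} : Deriv W M C Γ (A ::ₘ B ::ₘ Δ) →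
      Deriv W M C Γ (MF.par A B ::ₘ Δ)
  | lconj1 {A B Γ Δ} : Deriv W M C (A ::ₘ Γ) Δ → Deriv W M C (MF.conj A B ::ₘ Γ) Δ
  | lconj2 {A B Γ Δ} : Deriv W M C (B ::ₘ Γ) Δ → Deriv W M C (MF.conj A B ::ₘ Γ) Δ
  | rconj {A B Γ Δ} : Deriv W M C Γ (A ::ₘ Δ) → Deriv W M C Γ (B ::ₘ Δ) →
      Deriv W M C Γ (MF.conj A B ::ₘ Δ)
  | ldisj {A B Γ Δ} : Deriv W M C (A ::ₘ Γ) Δ → Deriv W M C (B ::ₘ Γ) Δ →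
      Deriv W M C (MF.disj A B ::ₘ Γ) Δ
  | rdisj1 {A B Γ Δ} : Deriv W M C Γ (A ::ₘ Δ) → Deriv W M C Γ (MF.disj A B ::ₘ Δ)
  | rdisj2 {A B Γ Δ} : Deriv W M C Γ (B ::ₘ Δ) → Deriv W M C Γ (MF.disj A B ::ₘ Δ)
  | lneg {A Γ Δ} : Deriv W M C Γ (A ::ₘ Δ) → Deriv W M C (MF.neg A ::ₘ Γ) Δ
  | rneg {A Γ Δ} : Deriv W M C (A ::ₘ Γ) Δ → Deriv W M C Γ (MF.neg A ::ₘ Δ)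
  | limp {A B Γ Γ' Δ Δ'} : Deriv W M C Γ (A ::ₘ Δ) → Deriv W M C (B ::ₘ Γ') Δ' →
      Deriv W M C (MF.imp A B ::ₘ (Γ + Γ')) (Δ + Δ')
  | rimp {A B Γ Δ} : Deriv W M C (A ::ₘ Γ) (B ::ₘ Δ) →
      Deriv W M C Γ (MF.imp A B ::ₘ Δ)
  | lw {A Γ Δ} : W → Deriv W M C Γ Δ → Deriv W M C (A ::ₘ Γ) Δ
  | rw {A Γ Δ} : W → Deriv W M C Γ Δ → Deriv W M C Γ (A ::ₘ Δ)
  | mingle {Γ Γ' Δ Δ'} : M → Deriv W M C Γ Δ → Deriv W M C Γ' Δ' →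
      Deriv W M C (Γ + Γ') (Δ + Δ')
  | lc {A Γ Δ} : C → Deriv W M C (A ::ₘ A ::ₘ Γ) Δ → Deriv W M C (A ::ₘ Γ) Δ
  | rc {A Γ Δ} : C → Deriv W M C Γ (A ::ₘ A ::ₘ Δ) → Deriv W M C Γ (A ::ₘ Δ)

/-- GMALL : no extra structural rules. -/
def GMALL : Multiset MF → Multiset MF → Prop := Deriv False False False

/-- GMALL + the mingle rule M. -/
def GMALLM : Multiset MF → Multiset MF → Prop := Deriv False True False

/-- GAMALL : GMALL + weakening. -/
def GAMALL : Multiset MF → Multiset MF → Prop := Deriv True False False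

/-- GSLL : GMALL + contraction. -/
def GSLL : Multiset MF → Multiset MF → Prop := Deriv False False True

/-- ¬□⊥ and ◇⊤ (the intuitionistic modal axiom D) are derivable in GMALL. -/
theorem gmall_neg_box_bot_and_diam_top :
    GMALL 0 {MF.neg MF.bot.box} ∧ GMALL 0 {MF.top.diam} := by
  constructor
  · exact Deriv.rneg (Deriv.lneg (Deriv.rimp (Deriv.rneg Deriv.lbot)))
  · exact Deriv.rimp Deriv.rtop
end

section
/- The K-style rules for the Tarskian modalities are admissible in GMALL: if the sequent Γ ⇒ A is derivable then so is □Γ ⇒ □A (where □Γ applies □ to each formula of Γ), and dually, if A ⇒ Δ is derivable then so is ◇A ⇒ ◇Δ (where ◇Δ applies ◇ to each formula of Δ). -/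
section Aux

lemma lbox' {Γ Δ} {A : MF} (h : Deriv False False False (A ::ₘ A ::ₘ Γ) Δ) :
    Deriv False False False (MF.box A ::ₘ Γ) Δ := by
  show Deriv False False False (MF.neg (MF.diam (MF.neg A)) ::ₘ Γ) Δ
  apply Deriv.lneg
  show Deriv False False False Γ
    (MF.par (MF.neg (MF.neg (MF.neg A))) (MF.neg A) ::ₘ Δ)
  apply Deriv.rpar
  rw [Multiset.cons_swap]
  exact Deriv.rneg (Deriv.rneg (Deriv.lneg (Deriv.rneg h)))

lemma rbox' {Γ₁ Γ₂ Δ₁ Δ₂} {A : MF} (h₁ : Deriv False False False Γ₁ (A ::ₘ Δ₁))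
    (h₂ : Deriv False False False Γ₂ (A ::ₘ Δ₂)) :
    Deriv False False False (Γ₁ + Γ₂) (MF.box A ::ₘ (Δ₁ + Δ₂)) := by
  show Deriv False False False (Γ₁ + Γ₂)
    (MF.neg (MF.diam (MF.neg A)) ::ₘ (Δ₁ + Δ₂))
  apply Deriv.rneg
  show Deriv False False False
    (MF.par (MF.neg (MF.neg (MF.neg A))) (MF.neg A) ::ₘ (Γ₁ + Γ₂)) (Δ₁ + Δ₂)
  exact Deriv.lpar (Deriv.lneg (Deriv.rneg (Deriv.lneg h₁))) (Deriv.lneg h₂)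

lemma rdiam' {Γ Δ} {A : MF} (h : Deriv False False False Γ (A ::ₘ A ::ₘ Δ)) :
    Deriv False False False Γ (MF.diam A ::ₘ Δ) := by
  show Deriv False False False Γ (MF.par (MF.neg (MF.neg A)) A ::ₘ Δ)
  exact Deriv.rpar (Deriv.rneg (Deriv.lneg h))

lemma ldiam' {Γ₁ Γ₂ Δ₁ Δ₂} {A : MF} (h₁ : Deriv False False False (A ::ₘ Γ₁) Δ₁)
    (h₂ : Deriv False False False (A ::ₘ Γ₂) Δ₂) :
    Deriv False False False (MF.diam A ::ₘ (Γ₁ + Γ₂)) (Δ₁ + Δ₂) := by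
  show Deriv False False False
    (MF.par (MF.neg (MF.neg A)) A ::ₘ (Γ₁ + Γ₂)) (Δ₁ + Δ₂)
  exact Deriv.lpar (Deriv.lneg (Deriv.rneg h₁)) h₂

lemma box_left (Γ : Multiset MF) : ∀ (S Δ : Multiset MF),
    GMALL (Γ + Γ + S) Δ → GMALL (Γ.map MF.box + S) Δ := by
  induction Γ using Multiset.induction with
  | empty => intro S Δ h; simpa using h
  | cons B Γ ih =>
    intro S Δ h
    have e : (B ::ₘ Γ) + (B ::ₘ Γ) + S = B ::ₘ B ::ₘ (Γ + Γ + S) := by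
      simp [Multiset.cons_add, Multiset.add_cons]
    rw [e] at h
    have h1 : GMALL (MF.box B ::ₘ (Γ + Γ + S)) Δ := lbox' h
    have h2 : GMALL (Γ + Γ + (MF.box B ::ₘ S)) Δ := by
      rwa [Multiset.add_cons]
    have := ih (MF.box B ::ₘ S) Δ h2
    rwa [Multiset.map_cons, Multiset.cons_add, ← Multiset.add_cons]

lemma diam_right (Δ : Multiset MF) : ∀ (S Γ : Multiset MF),
    GMALL Γ (Δ + Δ + S) → GMALL Γ (Δ.map MF.diam + S) := by
  induction Δ using Multiset.induction with
  | empty => intro S Γ h; simpa using h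
  | cons B Δ ih =>
    intro S Γ h
    have e : (B ::ₘ Δ) + (B ::ₘ Δ) + S = B ::ₘ B ::ₘ (Δ + Δ + S) := by
      simp [Multiset.cons_add, Multiset.add_cons]
    rw [e] at h
    have h1 : GMALL Γ (MF.diam B ::ₘ (Δ + Δ + S)) := rdiam' h
    have h2 : GMALL Γ (Δ + Δ + (MF.diam B ::ₘ S)) := by
      rwa [Multiset.add_cons]
    have := ih (MF.diam B ::ₘ S) Γ h2
    rwa [Multiset.map_cons, Multiset.cons_add, ← Multiset.add_cons]

end Aux

/-- The K-style rules K□̇ and K◇̇ are admissible in GMALL. -/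
theorem gmall_k_rules_admissible :
    (∀ (Γ : Multiset MF) (A : MF),
      GMALL Γ {A} → GMALL (Γ.map MF.box) {A.box}) ∧
    (∀ (A : MF) (Δ : Multiset MF),
      GMALL {A} Δ → GMALL {A.diam} (Δ.map MF.diam)) := by
  constructor
  · intro Γ A h
    have h' : GMALL (Γ + Γ) (MF.box A ::ₘ ((0 : Multiset MF) + 0)) := rbox' h h
    have := box_left Γ 0 {A.box} (by simpa using h')
    simpa using this
  · intro A Δ h
    have h' : GMALL (MF.diam A ::ₘ ((0 : Multiset MF) + 0)) (Δ + Δ) := ldiam' h h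
    have := diam_right Δ 0 {A.diam} (by simpa using h')
    simpa using this
end

section
/- For all formulas A and B, the following distribution formulas for the Tarskian modalities are derivable in GMALL: □(A ∧ B) ⊸ (□A ∧ □B), ◇(A ∧ B) ⊸ (◇A ∧ ◇B), (□A ∨ □B) ⊸ □(A ∨ B), and (◇A ∨ ◇B) ⊸ ◇(A ∨ B). -/
lemma mono_neg {W M C : Prop} {X Y : MF} (h : Deriv W M C {X} {Y}) :
    Deriv W M C {Y.neg} {X.neg} := by
  apply Deriv.lneg
  rw [show (Y ::ₘ {X.neg} : Multiset MF) = X.neg ::ₘ {Y} from Multiset.cons_swap _ _ _]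
  exact Deriv.rneg h

lemma mono_diam {W M C : Prop} {X Y : MF} (h : Deriv W M C {X} {Y}) :
    Deriv W M C {X.diam} {Y.diam} := by
  show Deriv W M C {MF.par X.neg.neg X} {MF.par Y.neg.neg Y}
  apply Deriv.rpar
  have := Deriv.lpar (Γ := 0) (Γ' := 0) (Δ := {Y.neg.neg}) (Δ' := {Y})
    (mono_neg (mono_neg h)) h
  simpa using this

lemma mono_box {W M C : Prop} {X Y : MF} (h : Deriv W M C {X} {Y}) :
    Deriv W M C {X.box} {Y.box} :=
  mono_neg (mono_diam (mono_neg h))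

/-- Distribution theorems for the Tarskian modalities in GMALL. -/
theorem gmall_distribution (A B : MF) :
    GMALL 0 {MF.imp (MF.conj A B).box (MF.conj A.box B.box)} ∧
    GMALL 0 {MF.imp (MF.conj A B).diam (MF.conj A.diam B.diam)} ∧
    GMALL 0 {MF.imp (MF.disj A.box B.box) (MF.disj A B).box} ∧
    GMALL 0 {MF.imp (MF.disj A.diam B.diam) (MF.disj A B).diam} := by
  have h1 : GMALL {MF.conj A B} {A} := Deriv.lconj1 (Deriv.id A)
  have h2 : GMALL {MF.conj A B} {B} := Deriv.lconj2 (Deriv.id B)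
  have g1 : GMALL {A} {MF.disj A B} := Deriv.rdisj1 (Deriv.id A)
  have g2 : GMALL {B} {MF.disj A B} := Deriv.rdisj2 (Deriv.id B)
  refine ⟨Deriv.rimp (Deriv.rconj (mono_box h1) (mono_box h2)),
    Deriv.rimp (Deriv.rconj (mono_diam h1) (mono_diam h2)),
    Deriv.rimp (Deriv.ldisj (mono_box g1) (mono_box g2)),
    Deriv.rimp (Deriv.ldisj (mono_diam g1) (mono_diam g2))⟩
end

section
/- If a sequent Γ ⇒ Δ is derivable in GKMALL, then the sequent [□̇/□]Γ ⇒ [□̇/□]Δ obtained by replacing every occurrence of the primitive modal operator □ by the Tarskian necessity □̇ is derivable in GMALL. -/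
/-- Formulas of KMALL: MALL formulas with a primitive modal operator □. -/
inductive KF : Type
  | atom : Nat → KF
  | zero : KF
  | one : KF
  | bot : KF
  | top : KF
  | neg : KF → KF
  | tensor : KF → KF → KF
  | par : KF → KF → KF
  | conj : KF → KF → KF
  | disj : KF → KF → KF
  | box : KF → KF

/-- Linear implication A ⊸ B := ¬A ⊕ B. -/
def KF.imp (A B : KF) : KF := KF.par (KF.neg A) B

/-- GKMALL: GMALL on the extended language plus the rule K□:
from Γ ⇒ A infer □Γ ⇒ □A. -/
inductive GKMALL : Multiset KF → Multiset KF → Prop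
  | id (A : KF) : GKMALL {A} {A}
  | l0 : GKMALL {KF.zero} 0
  | r0 {Γ Δ} : GKMALL Γ Δ → GKMALL Γ (KF.zero ::ₘ Δ)
  | l1 {Γ Δ} : GKMALL Γ Δ → GKMALL (KF.one ::ₘ Γ) Δ
  | r1 : GKMALL 0 {KF.one}
  | lbot {Γ Δ} : GKMALL (KF.bot ::ₘ Γ) Δ
  | rtop {Γ Δ} : GKMALL Γ (KF.top ::ₘ Δ)
  | ltensor {A B Γ Δ} : GKMALL (A ::ₘ B ::ₘ Γ) Δ → GKMALL (KF.tensor A B ::ₘ Γ) Δ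
  | rtensor {A B Γ Γ' Δ Δ'} : GKMALL Γ (A ::ₘ Δ) → GKMALL Γ' (B ::ₘ Δ') →
      GKMALL (Γ + Γ') (KF.tensor A B ::ₘ (Δ + Δ'))
  | lpar {A B Γ Γ' Δ Δ'} : GKMALL (A ::ₘ Γ) Δ → GKMALL (B ::ₘ Γ') Δ' →
      GKMALL (KF.par A B ::ₘ (Γ + Γ')) (Δ + Δ')
  | rpar {A B Γ Δ} : GKMALL Γ (A ::ₘ B ::ₘ Δ) → GKMALL Γ (KF.par A B ::ₘ Δ)
  | lconj1 {A B Γ Δ} : GKMALL (A ::ₘ Γ) Δ → GKMALL (KF.conj A B ::ₘ Γ) Δ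
  | lconj2 {A B Γ Δ} : GKMALL (B ::ₘ Γ) Δ → GKMALL (KF.conj A B ::ₘ Γ) Δ
  | rconj {A B Γ Δ} : GKMALL Γ (A ::ₘ Δ) → GKMALL Γ (B ::ₘ Δ) →
      GKMALL Γ (KF.conj A B ::ₘ Δ)
  | ldisj {A B Γ Δ} : GKMALL (A ::ₘ Γ) Δ → GKMALL (B ::ₘ Γ) Δ →
      GKMALL (KF.disj A B ::ₘ Γ) Δ
  | rdisj1 {A B Γ Δ} : GKMALL Γ (A ::ₘ Δ) → GKMALL Γ (KF.disj A B ::ₘ Δ)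
  | rdisj2 {A B Γ Δ} : GKMALL Γ (B ::ₘ Δ) → GKMALL Γ (KF.disj A B ::ₘ Δ)
  | lneg {A Γ Δ} : GKMALL Γ (A ::ₘ Δ) → GKMALL (KF.neg A ::ₘ Γ) Δ
  | rneg {A Γ Δ} : GKMALL (A ::ₘ Γ) Δ → GKMALL Γ (KF.neg A ::ₘ Δ)
  | limp {A B Γ Γ' Δ Δ'} : GKMALL Γ (A ::ₘ Δ) → GKMALL (B ::ₘ Γ') Δ' →
      GKMALL (KF.imp A B ::ₘ (Γ + Γ')) (Δ + Δ')
  | rimp {A B Γ Δ} : GKMALL (A ::ₘ Γ) (B ::ₘ Δ) → GKMALL Γ (KF.imp A B ::ₘ Δ)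
  | kbox {Γ A} : GKMALL Γ {A} → GKMALL (Γ.map KF.box) {KF.box A}

/-- The substitution [□̇/□]: replace the primitive □ by the Tarskian necessity. -/
def KF.tr : KF → MF
  | KF.atom n => MF.atom n
  | KF.zero => MF.zero
  | KF.one => MF.one
  | KF.bot => MF.bot
  | KF.top => MF.top
  | KF.neg A => MF.neg A.tr
  | KF.tensor A B => MF.tensor A.tr B.tr
  | KF.par A B => MF.par A.tr B.tr
  | KF.conj A B => MF.conj A.tr B.tr
  | KF.disj A B => MF.disj A.tr B.tr
  | KF.box A => MF.box A.tr

/-!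
The Tarskian necessity `□̇A = ¬(¬¬¬A ⊕ ¬A)` behaves in GMALL like `A ⊗ A`: on the left it
unfolds into two copies of `A`, and on the right it is introduced from two derivations of `A`
with disjoint contexts. So from `Γ ⇒ A` we get `Γ, Γ ⇒ □̇A`, and then each pair of copies of a
formula `B` of `Γ` is packed back into `□̇B`; this is the rule K for `□̇`. Every other rule of
GKMALL is translated to the same rule of GMALL.
-/

namespace Deriv

variable {W M C : Prop}

theorem box_left {A : MF} {Γ Δ : Multiset MF} (h : Deriv W M C (A ::ₘ A ::ₘ Γ) Δ) :
    Deriv W M C (MF.box A ::ₘ Γ) Δ :=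
  lneg (rpar (rneg (lneg (rneg (rneg h)))))

theorem box_right {A : MF} {Γ Γ' Δ Δ' : Multiset MF} (h : Deriv W M C Γ (A ::ₘ Δ))
    (h' : Deriv W M C Γ' (A ::ₘ Δ')) : Deriv W M C (Γ + Γ') (MF.box A ::ₘ (Δ + Δ')) :=
  rneg (lpar (lneg (rneg (lneg h))) (lneg h'))

theorem map_box_left {Γ Θ Δ : Multiset MF} (h : Deriv W M C (Γ + Γ + Θ) Δ) :
    Deriv W M C (Γ.map MF.box + Θ) Δ := by
  induction Γ using Multiset.induction generalizing Θ with
  | empty => simpa using h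
  | cons A Γ ih =>
    have h' : Deriv W M C (Γ + Γ + (A ::ₘ A ::ₘ Θ)) Δ := by
      simpa only [Multiset.add_cons, Multiset.cons_add] using h
    have hbox := box_left (by simpa only [Multiset.add_cons] using ih h')
    simpa only [Multiset.map_cons, Multiset.cons_add] using hbox

theorem box_K {Γ : Multiset MF} {A : MF} (h : Deriv W M C Γ {A}) :
    Deriv W M C (Γ.map MF.box) {MF.box A} := by
  simpa using map_box_left (Θ := 0) (by simpa using box_right h h)

end Deriv

/-- Every sequent derivable in GKMALL translates, replacing the primitive □ by
the Tarskian necessity, to a sequent derivable in GMALL. -/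
theorem gkmall_to_gmall {Γ Δ : Multiset KF} (h : GKMALL Γ Δ) :
    GMALL (Γ.map KF.tr) (Δ.map KF.tr) := by
  unfold GMALL
  induction h <;> simp only [KF.tr, KF.imp, Multiset.map_cons, Multiset.map_add,
    Multiset.map_singleton, Multiset.map_zero] at *
  case id A => exact .id A.tr
  case l0 => exact .l0
  case r0 ih => exact ih.r0
  case l1 ih => exact ih.l1
  case r1 => exact .r1
  case lbot => exact .lbot
  case rtop => exact .rtop
  case ltensor ih => exact ih.ltensor
  case rtensor ih ih' => exact ih.rtensor ih'
  case lpar ih ih' => exact ih.lpar ih'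
  case rpar ih => exact ih.rpar
  case lconj1 ih => exact ih.lconj1
  case lconj2 ih => exact ih.lconj2
  case rconj ih ih' => exact ih.rconj ih'
  case ldisj ih ih' => exact ih.ldisj ih'
  case rdisj1 ih => exact ih.rdisj1
  case rdisj2 ih => exact ih.rdisj2
  case lneg ih => exact ih.lneg
  case rneg ih => exact ih.rneg
  case limp ih ih' => exact ih.limp ih'
  case rimp ih => exact ih.rimp
  case kbox ih => simpa only [Multiset.map_map, Function.comp_def, KF.tr] using ih.box_K
end

section
/- There exist formulas A and B such that the formula (□A ∧ □B) ⊸ □(A ∧ B), with □ the Tarskian necessity, is not derivable in GMALL. -/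
namespace GmallSem

open Pointwise

/-- Linear negation in the phase model over `ℤ` with pole `ℤ \ {0}`. -/
def negS (X : Set ℤ) : Set ℤ := {y | -y ∉ X}

lemma mem_negS {x : ℤ} {X : Set ℤ} : x ∈ negS X ↔ -x ∉ X := Iff.rfl

@[simp] lemma negS_negS (X : Set ℤ) : negS (negS X) = X := by
  ext y; simp [negS]

/-- Interpretation of formulas as subsets of `ℤ` (every subset is a fact
for the pole `ℤ \ {0}`). -/
def val : MF → Set ℤ
  | .atom 0 => {1, 2}
  | .atom (_ + 1) => {0, 3}
  | .zero => {x | x ≠ 0}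
  | .one => {0}
  | .bot => ∅
  | .top => Set.univ
  | .neg A => negS (val A)
  | .tensor A B => val A + val B
  | .par A B => negS (negS (val A) + negS (val B))
  | .conj A B => val A ∩ val B
  | .disj A B => val A ∪ val B

lemma val_imp (A B : MF) : val (MF.imp A B) = negS (val A + negS (val B)) := by
  simp only [MF.imp, val, negS_negS]

/-- Tensor of the antecedent. -/
def S (Γ : Multiset MF) : Set ℤ := (Γ.map val).sum

/-- Tensor of the negations of the succedent. -/
def N (Δ : Multiset MF) : Set ℤ := (Δ.map fun A => negS (val A)).sum

@[simp] lemma S_cons (A : MF) (Γ : Multiset MF) : S (A ::ₘ Γ) = val A + S Γ := by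
  simp [S]

@[simp] lemma N_cons (A : MF) (Δ : Multiset MF) :
    N (A ::ₘ Δ) = negS (val A) + N Δ := by simp [N]

@[simp] lemma S_zero : S 0 = 0 := rfl
@[simp] lemma N_zero : N 0 = 0 := rfl

@[simp] lemma S_add (Γ Γ' : Multiset MF) : S (Γ + Γ') = S Γ + S Γ' := by
  simp [S]

@[simp] lemma N_add (Δ Δ' : Multiset MF) : N (Δ + Δ') = N Δ + N Δ' := by
  simp [N]

/-- Semantic validity of a sequent. -/
def Inv (Γ Δ : Multiset MF) : Prop := ∀ x ∈ S Γ, ∀ y ∈ N Δ, x + y ≠ 0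

lemma right_elt {A : MF} {Γ Δ : Multiset MF} (h : Inv Γ (A ::ₘ Δ)) {g d : ℤ}
    (hg : g ∈ S Γ) (hd : d ∈ N Δ) : g + d ∈ val A := by
  by_contra hc
  refine h g hg (-(g + d) + d) ?_ (by ring)
  rw [N_cons]
  exact Set.add_mem_add (by simpa [mem_negS] using hc) hd

lemma left_elt {A : MF} {Γ Δ : Multiset MF} (h : Inv (A ::ₘ Γ) Δ) {g d : ℤ}
    (hg : g ∈ S Γ) (hd : d ∈ N Δ) : g + d ∈ negS (val A) := by
  rw [mem_negS]
  intro hc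
  refine h (-(g + d) + g) ?_ d hd (by ring)
  rw [S_cons]
  exact Set.add_mem_add hc hg

/-- Soundness of GMALL for the phase model. -/
theorem sound {Γ Δ : Multiset MF} (h : Deriv False False False Γ Δ) : Inv Γ Δ := by
  induction h with
  | id A =>
      intro x hx y hy
      simp only [show ({A} : Multiset MF) = A ::ₘ 0 from rfl, S_cons, N_cons,
        S_zero, N_zero, add_zero] at hx hy
      rw [mem_negS] at hy
      intro hxy
      exact hy (by rw [show -y = x by omega]; exact hx)
  | l0 =>
      intro x hx y hy
      simp only [show ({MF.zero} : Multiset MF) = MF.zero ::ₘ 0 from rfl,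
        S_cons, S_zero, N_zero, add_zero] at hx hy
      simp only [Set.mem_zero] at hy
      simp only [val, Set.mem_setOf_eq] at hx
      omega
  | r0 _ ih =>
      intro x hx y hy
      rw [N_cons, Set.mem_add] at hy
      obtain ⟨c, hc, d, hd, rfl⟩ := hy
      simp only [val, negS, Set.mem_setOf_eq, not_not] at hc
      have := ih x hx d hd
      omega
  | l1 _ ih =>
      intro x hx y hy
      rw [S_cons, Set.mem_add] at hx
      obtain ⟨c, hc, g, hg, rfl⟩ := hx
      simp only [val, Set.mem_singleton_iff] at hc
      have := ih g hg y hy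
      omega
  | r1 =>
      intro x hx y hy
      simp only [show ({MF.one} : Multiset MF) = MF.one ::ₘ 0 from rfl,
        N_cons, N_zero, S_zero, add_zero] at hy hx
      simp only [Set.mem_zero] at hx
      simp only [val, negS, Set.mem_setOf_eq, Set.mem_singleton_iff] at hy
      omega
  | lbot =>
      intro x hx y hy
      rw [S_cons, Set.mem_add] at hx
      obtain ⟨c, hc, -, -, -⟩ := hx
      simp [val] at hc
  | rtop =>
      intro x hx y hy
      rw [N_cons, Set.mem_add] at hy
      obtain ⟨c, hc, -, -, -⟩ := hy
      simp [val, negS] at hc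
  | ltensor _ ih =>
      intro x hx y hy
      rw [S_cons, Set.mem_add] at hx
      obtain ⟨ab, hab, g, hg, rfl⟩ := hx
      rw [show val (MF.tensor _ _) = val _ + val _ from rfl, Set.mem_add] at hab
      obtain ⟨a, ha, b, hb, rfl⟩ := hab
      have := ih (a + (b + g)) (by
        rw [S_cons, S_cons]
        exact Set.add_mem_add ha (Set.add_mem_add hb hg)) y hy
      omega
  | @rtensor A B Γ Γ' Δ Δ' _ _ ih1 ih2 =>
      intro x hx y hy
      rw [S_add, Set.mem_add] at hx
      rw [N_cons, N_add, Set.mem_add] at hy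
      obtain ⟨g1, hg1, g2, hg2, rfl⟩ := hx
      obtain ⟨t, ht, w, hw, rfl⟩ := hy
      rw [Set.mem_add] at hw
      obtain ⟨d1, hd1, d2, hd2, rfl⟩ := hw
      have h1 : g1 + d1 ∈ val A := right_elt ih1 hg1 hd1
      have h2 : g2 + d2 ∈ val B := right_elt ih2 hg2 hd2
      rw [mem_negS] at ht
      intro hc
      refine ht ?_
      rw [show val (MF.tensor A B) = val A + val B from rfl,
        show -t = (g1 + d1) + (g2 + d2) by omega]
      exact Set.add_mem_add h1 h2
  | @lpar A B Γ Γ' Δ Δ' _ _ ih1 ih2 =>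
      intro x hx y hy
      rw [S_cons, S_add, Set.mem_add] at hx
      rw [N_add, Set.mem_add] at hy
      obtain ⟨p, hp, w, hw, rfl⟩ := hx
      rw [Set.mem_add] at hw
      obtain ⟨g1, hg1, g2, hg2, rfl⟩ := hw
      obtain ⟨d1, hd1, d2, hd2, rfl⟩ := hy
      have h1 := left_elt ih1 hg1 hd1
      have h2 := left_elt ih2 hg2 hd2
      rw [show val (MF.par A B) = negS (negS (val A) + negS (val B)) from rfl,
        mem_negS] at hp
      intro hc
      refine hp ?_
      rw [show -p = (g1 + d1) + (g2 + d2) by omega]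
      exact Set.add_mem_add h1 h2
  | @rpar A B Γ Δ _ ih =>
      intro x hx y hy
      rw [N_cons] at hy
      rw [show negS (val (MF.par A B)) = negS (val A) + negS (val B) by
        simp only [val, negS_negS], Set.mem_add] at hy
      obtain ⟨ab, hab, d, hd, rfl⟩ := hy
      rw [Set.mem_add] at hab
      obtain ⟨a, ha, b, hb, rfl⟩ := hab
      have := ih x hx (a + (b + d)) (by
        rw [N_cons, N_cons]
        exact Set.add_mem_add ha (Set.add_mem_add hb hd))
      omega
  | lconj1 _ ih =>
      intro x hx y hy
      rw [S_cons, Set.mem_add] at hx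
      obtain ⟨c, hc, g, hg, rfl⟩ := hx
      exact ih (c + g) (by rw [S_cons]; exact Set.add_mem_add hc.1 hg) y hy
  | lconj2 _ ih =>
      intro x hx y hy
      rw [S_cons, Set.mem_add] at hx
      obtain ⟨c, hc, g, hg, rfl⟩ := hx
      exact ih (c + g) (by rw [S_cons]; exact Set.add_mem_add hc.2 hg) y hy
  | rconj _ _ ih1 ih2 =>
      intro x hx y hy
      rw [N_cons, Set.mem_add] at hy
      obtain ⟨c, hc, d, hd, rfl⟩ := hy
      simp only [val, negS, Set.mem_setOf_eq, Set.mem_inter_iff, not_and_or] at hc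
      rcases hc with hc | hc
      · exact ih1 x hx (c + d) (by rw [N_cons]; exact Set.add_mem_add hc hd)
      · exact ih2 x hx (c + d) (by rw [N_cons]; exact Set.add_mem_add hc hd)
  | ldisj _ _ ih1 ih2 =>
      intro x hx y hy
      rw [S_cons, Set.mem_add] at hx
      obtain ⟨c, hc, g, hg, rfl⟩ := hx
      rcases hc with hc | hc
      · exact ih1 (c + g) (by rw [S_cons]; exact Set.add_mem_add hc hg) y hy
      · exact ih2 (c + g) (by rw [S_cons]; exact Set.add_mem_add hc hg) y hy
  | rdisj1 _ ih =>
      intro x hx y hy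
      rw [N_cons, Set.mem_add] at hy
      obtain ⟨c, hc, d, hd, rfl⟩ := hy
      simp only [val, negS, Set.mem_setOf_eq, Set.mem_union, not_or] at hc
      exact ih x hx (c + d) (by rw [N_cons]; exact Set.add_mem_add hc.1 hd)
  | rdisj2 _ ih =>
      intro x hx y hy
      rw [N_cons, Set.mem_add] at hy
      obtain ⟨c, hc, d, hd, rfl⟩ := hy
      simp only [val, negS, Set.mem_setOf_eq, Set.mem_union, not_or] at hc
      exact ih x hx (c + d) (by rw [N_cons]; exact Set.add_mem_add hc.2 hd)
  | lneg _ ih =>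
      intro x hx y hy
      rw [S_cons, Set.mem_add] at hx
      obtain ⟨a, ha, g, hg, rfl⟩ := hx
      rw [show val (MF.neg _) = negS (val _) from rfl] at ha
      have := ih g hg (a + y) (by rw [N_cons]; exact Set.add_mem_add ha hy)
      omega
  | @rneg A Γ Δ _ ih =>
      intro x hx y hy
      rw [N_cons] at hy
      rw [show negS (val (MF.neg A)) = val A by simp only [val, negS_negS],
        Set.mem_add] at hy
      obtain ⟨a, ha, d, hd, rfl⟩ := hy
      have := ih (a + x) (by rw [S_cons]; exact Set.add_mem_add ha hx) d hd
      omega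
  | @limp A B Γ Γ' Δ Δ' _ _ ih1 ih2 =>
      intro x hx y hy
      rw [S_cons, S_add, Set.mem_add] at hx
      rw [N_add, Set.mem_add] at hy
      obtain ⟨p, hp, w, hw, rfl⟩ := hx
      rw [Set.mem_add] at hw
      obtain ⟨g1, hg1, g2, hg2, rfl⟩ := hw
      obtain ⟨d1, hd1, d2, hd2, rfl⟩ := hy
      have h1 : g1 + d1 ∈ val A := right_elt ih1 hg1 hd1
      have h2 := left_elt ih2 hg2 hd2
      rw [val_imp, mem_negS] at hp
      intro hc
      refine hp ?_
      rw [show -p = (g1 + d1) + (g2 + d2) by omega]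
      exact Set.add_mem_add h1 h2
  | @rimp A B Γ Δ _ ih =>
      intro x hx y hy
      rw [N_cons] at hy
      rw [show negS (val (MF.imp A B)) = val A + negS (val B) by
        rw [val_imp, negS_negS], Set.mem_add] at hy
      obtain ⟨ab, hab, d, hd, rfl⟩ := hy
      rw [Set.mem_add] at hab
      obtain ⟨a, ha, b, hb, rfl⟩ := hab
      have := ih (a + x) (by rw [S_cons]; exact Set.add_mem_add ha hx)
        (b + d) (by rw [N_cons]; exact Set.add_mem_add hb hd)
      omega
  | lw hW => exact hW.elim
  | rw hW => exact hW.elim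
  | mingle hM => exact hM.elim
  | lc hC => exact hC.elim
  | rc hC => exact hC.elim

lemma val_box (A : MF) : val (MF.box A) = val A + val A := by
  simp only [MF.box, MF.diam, MF.imp, val, negS_negS]

lemma val_atom0 : val (MF.atom 0) = {1, 2} := rfl
lemma val_atom1 : val (MF.atom 1) = {0, 3} := rfl

end GmallSem

/-- The converse distribution (□A ∧ □B) ⊸ □(A ∧ B) is not derivable in GMALL
for some formulas A, B. -/
theorem gmall_converse_dist_not_derivable :
    ∃ A B : MF,
      ¬ GMALL 0 {MF.imp (MF.conj A.box B.box) (MF.conj A B).box} := by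
  open GmallSem Pointwise in
  refine ⟨MF.atom 0, MF.atom 1, fun h => ?_⟩
  have hInv : GmallSem.Inv 0
      {MF.imp (MF.conj (MF.atom 0).box (MF.atom 1).box)
        (MF.conj (MF.atom 0) (MF.atom 1)).box} := GmallSem.sound h
  have h3 : (3 : ℤ) ∈ val (MF.conj (MF.atom 0).box (MF.atom 1).box) := by
    rw [show val (MF.conj (MF.atom 0).box (MF.atom 1).box)
      = val (MF.atom 0).box ∩ val (MF.atom 1).box from rfl, val_box, val_box,
      val_atom0, val_atom1]
    constructor
    · rw [Set.mem_add]
      exact ⟨1, by simp, 2, by simp, by norm_num⟩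
    · rw [Set.mem_add]
      exact ⟨0, by simp, 3, by simp, by norm_num⟩
  have hneg3 : (-3 : ℤ) ∈ negS (val (MF.conj (MF.atom 0) (MF.atom 1)).box) := by
    rw [mem_negS, val_box]
    rw [Set.mem_add]
    rintro ⟨x, hx, y, hy, hxy⟩
    have hx0 : x ∈ val (MF.atom 0) := hx.1
    have hx1 : x ∈ val (MF.atom 1) := hx.2
    rw [val_atom0] at hx0
    rw [val_atom1] at hx1
    simp only [Set.mem_insert_iff, Set.mem_singleton_iff] at hx0 hx1
    omega
  have hF : (0 : ℤ) ∉ val (MF.imp (MF.conj (MF.atom 0).box (MF.atom 1).box)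
      (MF.conj (MF.atom 0) (MF.atom 1)).box) := by
    rw [val_imp]
    simp only [mem_negS, neg_zero, not_not]
    rw [Set.mem_add]
    exact ⟨3, h3, -3, hneg3, by norm_num⟩
  have h0S : (0 : ℤ) ∈ S 0 := by
    rw [S_zero]; exact Set.mem_zero.mpr rfl
  have h0N : (0 : ℤ) ∈ N {MF.imp (MF.conj (MF.atom 0).box (MF.atom 1).box)
      (MF.conj (MF.atom 0) (MF.atom 1)).box} := by
    rw [show ({MF.imp (MF.conj (MF.atom 0).box (MF.atom 1).box)
      (MF.conj (MF.atom 0) (MF.atom 1)).box} : Multiset MF)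
      = (MF.imp (MF.conj (MF.atom 0).box (MF.atom 1).box)
        (MF.conj (MF.atom 0) (MF.atom 1)).box) ::ₘ 0 from rfl, N_cons, N_zero,
      add_zero, mem_negS, neg_zero]
    exact hF
  exact hInv 0 h0S 0 h0N (by norm_num)
end

section
/- For all formulas A and B, the formulas □A ⊸ ◇A (a form of the modal axiom D) and (◇A ⊸ ◇B) ⊸ ◇(A ⊸ B) are derivable in GMALL extended with the mingle rule M. -/
private lemma Deriv.exch {W M C : Prop} {Γ Γ' Δ Δ' : Multiset MF}
    (hΓ : Γ = Γ') (hΔ : Δ = Δ') (h : Deriv W M C Γ Δ) : Deriv W M C Γ' Δ' := by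
  subst hΓ; subst hΔ; exact h

/-- □A ⊸ ◇A (a form of axiom D) and (◇A ⊸ ◇B) ⊸ ◇(A ⊸ B) are derivable in
GMALL extended with the mingle rule. -/
theorem gmall_mingle_D_and_K' (A B : MF) :
    GMALLM 0 {MF.imp A.box A.diam} ∧
    GMALLM 0 {MF.imp (MF.imp A.diam B.diam) (A.imp B).diam} := by
  constructor
  · -- ⇒ □A ⊸ ◇A
    apply Deriv.rimp
    apply Deriv.lneg
    -- goal: 0 ⇒ ◇¬A ::ₘ {◇A}
    have d2 : Deriv False True False 0 (MF.neg A ::ₘ {A}) := Deriv.rneg (Deriv.id A)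
    have d4 : Deriv False True False (MF.neg (MF.neg A) ::ₘ {MF.neg A}) 0 :=
      Deriv.lneg (Deriv.id (MF.neg A))
    have d5 := Deriv.mingle (Γ := 0) (Δ := MF.neg A ::ₘ {A}) trivial d2 d4
    have d6 : Deriv False True False {MF.neg A} ((MF.neg A).diam ::ₘ {A}) := by
      apply Deriv.rimp
      exact d5.exch (by simp) (by simp [Multiset.cons_swap])
    have d7 : Deriv False True False 0 (A.diam ::ₘ {(MF.neg A).diam}) := by
      apply Deriv.rimp
      exact d6.exch rfl (Multiset.cons_swap _ _ _)
    exact d7.exch rfl (Multiset.cons_swap _ _ _)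
  · -- ⇒ (◇A ⊸ ◇B) ⊸ ◇(A ⊸ B)
    set X := MF.imp A.diam B.diam with hX
    set Cc := A.imp B with hC
    -- premise1 : A, A ⇒ ◇A
    have p1 : Deriv False True False (A ::ₘ {A}) {A.diam} := by
      apply Deriv.rimp
      have m := Deriv.mingle (W := False) (C := False) (Γ := MF.neg A ::ₘ {A}) (Δ := 0) trivial
        (Deriv.lneg (Deriv.id A)) (Deriv.id A)
      exact m.exch (by simp [Multiset.cons_swap]) (by simp)
    -- premise2 : ◇B ⇒ B, B
    have p2 : Deriv False True False {B.diam} (B ::ₘ {B}) := by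
      have l := Deriv.limp (W := False) (M := True) (C := False) (Γ := 0) (Δ := {B}) (Γ' := 0) (Δ' := {B})
        (Deriv.rneg (Deriv.id B)) (Deriv.id B)
      exact l.exch (by simp [MF.diam]) (by simp)
    have l := Deriv.limp (Γ := A ::ₘ {A}) (Δ := 0) (Γ' := 0) (Δ' := B ::ₘ {B})
      (p1.exch rfl rfl) p2
    -- l : X ::ₘ (A ::ₘ {A} + 0) ⇒ 0 + (B ::ₘ {B})
    have l2 : Deriv False True False (A ::ₘ A ::ₘ {X}) (B ::ₘ {B}) :=
      l.exch (by
        rw [add_zero]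
        exact (Multiset.cons_swap X A _).trans
          (congrArg (Multiset.cons A) (Multiset.cons_swap X A 0))) (by simp)
    have rr1 : Deriv False True False (A ::ₘ {X}) (Cc ::ₘ {B}) := Deriv.rimp l2
    have r2 : Deriv False True False {X} (Cc ::ₘ {Cc}) := by
      apply Deriv.rimp
      exact rr1.exch rfl (Multiset.cons_swap _ _ _)
    have ln : Deriv False True False (MF.neg Cc ::ₘ {X}) {Cc} := Deriv.lneg r2
    exact Deriv.rimp (Deriv.rimp ln)
end

section
/- The mingle rule M is admissible in GAMALL; consequently, every sequent derivable in GMALL extended with the rule M is derivable in GAMALL. -/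
/-- Mingle is admissible in GAMALL; hence every sequent derivable in GMALL + M
is derivable in GAMALL. -/
theorem mingle_admissible_in_gamall :
    (∀ (Γ Γ' Δ Δ' : Multiset MF),
      GAMALL Γ Δ → GAMALL Γ' Δ' → GAMALL (Γ + Γ') (Δ + Δ')) ∧
    (∀ (Γ Δ : Multiset MF), GMALLM Γ Δ → GAMALL Γ Δ) := by
  have wkL : ∀ (Γ' Γ Δ : Multiset MF), GAMALL Γ Δ → GAMALL (Γ' + Γ) Δ := by
    intro Γ'
    induction Γ' using Multiset.induction_on with
    | empty => intro Γ Δ h; simpa using h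
    | cons a s ih =>
        intro Γ Δ h
        rw [Multiset.cons_add]
        exact Deriv.lw trivial (ih Γ Δ h)
  have wkR : ∀ (Δ' Γ Δ : Multiset MF), GAMALL Γ Δ → GAMALL Γ (Δ' + Δ) := by
    intro Δ'
    induction Δ' using Multiset.induction_on with
    | empty => intro Γ Δ h; simpa using h
    | cons a s ih =>
        intro Γ Δ h
        rw [Multiset.cons_add]
        exact Deriv.rw trivial (ih Γ Δ h)
  have ming : ∀ (Γ Γ' Δ Δ' : Multiset MF),
      GAMALL Γ Δ → GAMALL Γ' Δ' → GAMALL (Γ + Γ') (Δ + Δ') := by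
    intro Γ Γ' Δ Δ' h _
    rw [add_comm Γ Γ', add_comm Δ Δ']
    exact wkL _ _ _ (wkR _ _ _ h)
  refine ⟨ming, ?_⟩
  intro Γ Δ h
  induction h with
  | id A => exact Deriv.id A
  | l0 => exact Deriv.l0
  | r0 _ ih => exact Deriv.r0 ih
  | l1 _ ih => exact Deriv.l1 ih
  | r1 => exact Deriv.r1
  | lbot => exact Deriv.lbot
  | rtop => exact Deriv.rtop
  | ltensor _ ih => exact Deriv.ltensor ih
  | rtensor _ _ ih1 ih2 => exact Deriv.rtensor ih1 ih2
  | lpar _ _ ih1 ih2 => exact Deriv.lpar ih1 ih2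
  | rpar _ ih => exact Deriv.rpar ih
  | lconj1 _ ih => exact Deriv.lconj1 ih
  | lconj2 _ ih => exact Deriv.lconj2 ih
  | rconj _ _ ih1 ih2 => exact Deriv.rconj ih1 ih2
  | ldisj _ _ ih1 ih2 => exact Deriv.ldisj ih1 ih2
  | rdisj1 _ ih => exact Deriv.rdisj1 ih
  | rdisj2 _ ih => exact Deriv.rdisj2 ih
  | lneg _ ih => exact Deriv.lneg ih
  | rneg _ ih => exact Deriv.rneg ih
  | limp _ _ ih1 ih2 => exact Deriv.limp ih1 ih2
  | rimp _ ih => exact Deriv.rimp ih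
  | lw hW => exact absurd hW id
  | rw hW => exact absurd hW id
  | mingle _ _ _ ih1 ih2 => exact ming _ _ _ _ ih1 ih2
  | lc hC => exact absurd hC id
  | rc hC => exact absurd hC id
end

section
/- The additive modal rules are admissible in GAMALL: if Γ ⇒ Δ,A is derivable then so is Γ ⇒ Δ,◇A, and if A,Γ ⇒ Δ is derivable then so is □A,Γ ⇒ Δ. -/
/-- The additive modal rules R◇' and L□' are admissible in GAMALL. -/
theorem gamall_additive_modal_rules :
    (∀ (A : MF) (Γ Δ : Multiset MF),
      GAMALL Γ (A ::ₘ Δ) → GAMALL Γ (A.diam ::ₘ Δ)) ∧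
    (∀ (A : MF) (Γ Δ : Multiset MF),
      GAMALL (A ::ₘ Γ) Δ → GAMALL (A.box ::ₘ Γ) Δ) := by
  constructor
  · intro A Γ Δ h
    exact Deriv.rimp (Deriv.lw trivial h)
  · intro A Γ Δ h
    apply Deriv.lneg
    apply Deriv.rimp
    apply Deriv.rneg
    rw [Multiset.cons_swap]
    exact Deriv.lw trivial h
end

section
/- The following rules are admissible in GAMALL: if the sequent A ⇒ B is derivable, then so are the sequents ⇒ ◇(A ⊸ □B) and ⇒ ◇(◇A ⊸ B). -/
/-!
A sequent `Γ ⇒ F, F, Δ` yields `Γ ⇒ ◇F, Δ` without contraction: moving one copy of `F` to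
the left as `¬F` is exactly the premise of `⊸`-right for `◇F = ¬F ⊸ F`. Hence
`A, A ⇒ C, C` yields `⇒ ◇(A ⊸ C)`, and weakening produces the doubled sequents
`A, A ⇒ □B, □B` and `◇A, ◇A ⇒ B, B` from `A ⇒ B`.
-/

namespace Deriv

variable {W M C : Prop}

theorem rdiam {F : MF} {Γ Δ : Multiset MF} (h : Deriv W M C Γ (F ::ₘ F ::ₘ Δ)) :
    Deriv W M C Γ (F.diam ::ₘ Δ) :=
  rimp (lneg h)

theorem rdiam_imp {A F : MF} {Γ Δ : Multiset MF}
    (h : Deriv W M C (A ::ₘ A ::ₘ Γ) (F ::ₘ F ::ₘ Δ)) :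
    Deriv W M C Γ ((A.imp F).diam ::ₘ Δ) := by
  have once : Deriv W M C (A ::ₘ Γ) (F ::ₘ A.imp F ::ₘ Δ) := by
    rw [Multiset.cons_swap]
    exact rimp h
  exact rdiam (rimp once)

theorem doubled_rbox {A B : MF} (hW : W) (h : Deriv W M C {A} {B}) :
    Deriv W M C (A ::ₘ A ::ₘ 0) (B.box ::ₘ B.box ::ₘ 0) := by
  have hnegB : Deriv W M C (B.neg ::ₘ A ::ₘ 0) 0 := lneg h
  have hnegnegB : Deriv W M C {A} (B.neg.neg ::ₘ 0) := rneg hnegB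
  exact rneg (limp hnegnegB (rw hW hnegB))

theorem doubled_ldiam {A B : MF} (hW : W) (h : Deriv W M C {A} {B}) :
    Deriv W M C (A.diam ::ₘ A.diam ::ₘ 0) (B ::ₘ B ::ₘ 0) := by
  have hnegA : Deriv W M C {A.diam} (A.neg ::ₘ {B}) := lw hW (rneg h)
  exact limp hnegA h

end Deriv

/-- The rules R◇R□ and R◇L◇ are admissible in GAMALL. -/
theorem gamall_derived_rules (A B : MF) (h : GAMALL {A} {B}) :
    GAMALL 0 {(A.imp B.box).diam} ∧ GAMALL 0 {((A.diam).imp B).diam} :=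
  ⟨Deriv.rdiam_imp (Deriv.doubled_rbox trivial h),
    Deriv.rdiam_imp (Deriv.doubled_ldiam trivial h)⟩
end
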